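/- arXiv:1701.03401 — 2 statements merged into one kernel-verified Lean document; each statement's English description precedes it below -/
import Mathlib

section
/- For every strict partition λ of length at most n, the factorial Schur Q-function Q*_λ(x₁,...,xₙ) := Q_λ(x₁,...,xₙ | δ), where δ = (0,1,2,3,...), is a Q-symmetric polynomial, and the difference Q*_λ − Q_λ has total degree strictly less than |λ|. -/
open MvPolynomial

/-- A strict partition of length at most `n`. -/
structure SPartition (n : ℕ) where
  len : ℕ
  len_le : len ≤ n
  part : Fin len → ℕ
  anti : StrictAnti part
  pos : ∀ i, 0 < part i

namespace SPartition

/-- `|λ| = λ₁ + ⋯ + λ_ℓ`. -/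
def size {n : ℕ} (l : SPartition n) : ℕ := ∑ i, l.part i

/-- λ padded with zeros to length `n`. -/
def padN {n : ℕ} (l : SPartition n) : Fin n → ℕ :=
  fun i => if h : (i : ℕ) < l.len then l.part ⟨i, h⟩ else 0

/-- λ padded with zeros, as a point of `ℂⁿ`. -/
noncomputable def padC {n : ℕ} (l : SPartition n) : Fin n → ℂ := fun i => (l.padN i : ℂ)

end SPartition

/-- A polynomial in `n` variables is Q-symmetric if it is symmetric and (when `n ≥ 2`)
the substitution `x₁ = t`, `x₂ = -t` yields a result independent of `t`. -/
def QSym {n : ℕ} (p : MvPolynomial (Fin n) ℂ) : Prop :=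
  (∀ σ : Equiv.Perm (Fin n), MvPolynomial.rename σ p = p) ∧
  ∀ (_ : 2 ≤ n) (t s : ℂ) (x : Fin n → ℂ),
    MvPolynomial.eval
      (fun i : Fin n => if (i : ℕ) = 0 then t else if (i : ℕ) = 1 then -t else x i) p =
    MvPolynomial.eval
      (fun i : Fin n => if (i : ℕ) = 0 then s else if (i : ℕ) = 1 then -s else x i) p

/-- The generalized power `(x | a)^k = ∏_{i=1}^k (x - a_i)`. -/
noncomputable def genPow (a : ℕ → ℂ) (k : ℕ) (x : ℂ) : ℂ :=
  ∏ i ∈ Finset.range k, (x - a i)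

/-- The rational expression
`(2^ℓ/(n-ℓ)!) ∑_{σ ∈ Sₙ} ∏ᵢ (x_{σ(i)}|a)^{λᵢ} ∏_{i≤ℓ, i<j≤n} (x_{σ(i)}+x_{σ(j)})/(x_{σ(i)}-x_{σ(j)})`. -/
noncomputable def QFormula {n : ℕ} (lam : SPartition n) (a : ℕ → ℂ) (x : Fin n → ℂ) : ℂ :=
  ((2 : ℂ) ^ lam.len / ((n - lam.len).factorial : ℂ)) *
    ∑ σ : Equiv.Perm (Fin n),
      (∏ i : Fin lam.len, genPow a (lam.part i) (x (σ (Fin.castLE lam.len_le i)))) *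
      ∏ i : Fin lam.len, ∏ j : Fin n,
        if (i : ℕ) < (j : ℕ) then
          (x (σ (Fin.castLE lam.len_le i)) + x (σ j)) /
            (x (σ (Fin.castLE lam.len_le i)) - x (σ j))
        else 1

/-- `P` represents the function `QFormula lam a` (wherever the denominators are nonzero,
i.e. at points with pairwise distinct coordinates). -/
def IsQPoly {n : ℕ} (lam : SPartition n) (a : ℕ → ℂ) (P : MvPolynomial (Fin n) ℂ) : Prop :=
  ∀ x : Fin n → ℂ, Function.Injective x → MvPolynomial.eval x P = QFormula lam a x

/-- The sequence `(0,0,0,…)`; `Q_λ = Q_λ(·|0)` is the classical Schur Q-function. -/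
noncomputable def zeroSeq : ℕ → ℂ := fun _ => 0

/-- The sequence `δ = (0,1,2,…)`; `Q*_λ = Q_λ(·|δ)` is the factorial Schur Q-function. -/
noncomputable def deltaSeq : ℕ → ℂ := fun i => (i : ℂ)

/-- `H(λ) = λ₁!⋯λ_ℓ! ∏_{i<j≤ℓ} (λᵢ+λⱼ)/(λᵢ-λⱼ)`. -/
noncomputable def Hval {n : ℕ} (lam : SPartition n) : ℂ :=
  (∏ i : Fin lam.len, ((lam.part i).factorial : ℂ)) *
    ∏ i : Fin lam.len, ∏ j : Fin lam.len,
      if i < j then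
        ((lam.part i : ℂ) + (lam.part j : ℂ)) / ((lam.part i : ℂ) - (lam.part j : ℂ))
      else 1

/-! On points with pairwise distinct coordinates the polynomials agree with the rational
formula, and a polynomial vanishing off the hypersurface `∏_{i<j} (xᵢ - xⱼ) = 0` is zero, so both
claims may be checked there.

Q-symmetry: put `t, -t` at the positions `p = σ⁻¹ 1`, `q = σ⁻¹ 2` of the summand for `σ`. If
`min p q < ℓ`, the summand contains the factor `(t + (-t))/(2t) = 0`; otherwise `t` enters only
through `(w + t)/(w - t) · (w - t)/(w + t) = 1`.

Top part: for fixed `x`, `t ↦ Q_λ(t x | a)` is a polynomial in `t` of degree `≤ |λ|` whose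
coefficient of `t^|λ|` does not depend on `a`, because the ratios are scale-invariant and
`(t y | a)^k = (t y)^k + O(t^{k-1})`. Hence all homogeneous components of `Q*_λ - Q_λ` of degree
`≥ |λ|` vanish. -/

open Finset

namespace MvPolynomial

variable {σ R : Type*}

section CommSemiring

variable [CommSemiring R]

theorem eval_aeval {τ : Type*} (g : τ → MvPolynomial σ R) (z : σ → R)
    (p : MvPolynomial τ R) : eval z (aeval g p) = eval (fun i => eval z (g i)) p := by
  induction p using MvPolynomial.induction_on with
  | C r => simp
  | add p q hp hq => simp only [map_add, hp, hq]
  | mul_X p i hp => simp only [map_mul, aeval_X, eval_X, hp]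

theorem IsHomogeneous.eval_smul {φ : MvPolynomial σ R} {k : ℕ} (hφ : φ.IsHomogeneous k)
    (t : R) (x : σ → R) : eval (t • x) φ = t ^ k * eval x φ := by
  rw [eval_eq, eval_eq, mul_sum]
  refine sum_congr rfl fun d hd => ?_
  have hdeg : ∑ i ∈ d.support, d i = k := by
    simpa [Finsupp.weight_apply, Finsupp.sum] using hφ (mem_support_iff.1 hd)
  simp only [Pi.smul_apply, smul_eq_mul, mul_pow, prod_mul_distrib, prod_pow_eq_pow_sum, hdeg]
  ring

theorem eval_smul_eq_sum_homogeneousComponent (p : MvPolynomial σ R) (t : R) (x : σ → R) :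
    eval (t • x) p =
      ∑ k ∈ range (p.totalDegree + 1), t ^ k * eval x (homogeneousComponent k p) := by
  conv_lhs => rw [← sum_homogeneousComponent p]
  simp only [map_sum, (homogeneousComponent_isHomogeneous _ p).eval_smul]

theorem totalDegree_lt_of_homogeneousComponent_eq_zero {p : MvPolynomial σ R} (hp : p ≠ 0)
    {m : ℕ} (h : ∀ k, m ≤ k → homogeneousComponent k p = 0) : p.totalDegree < m := by
  by_contra! hm
  obtain ⟨d, hd, hdeg⟩ :=
    exists_mem_eq_sup p.support (support_nonempty.2 hp) fun d => d.sum fun _ e => e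
  have hcoeff := congr_arg (coeff d) (h _ hm)
  rw [coeff_homogeneousComponent, if_pos (by rw [totalDegree, hdeg]; rfl), coeff_zero]
    at hcoeff
  exact mem_support_iff.1 hd hcoeff

end CommSemiring

section Domain

variable [CommRing R] [IsDomain R]

theorem eval_det_vandermonde_ne_zero_iff {n : ℕ} (g : Fin n → MvPolynomial σ R) (z : σ → R) :
    eval z (Matrix.vandermonde g).det ≠ 0 ↔ Function.Injective fun i => eval z (g i) := by
  rw [RingHom.map_det, ← Matrix.det_vandermonde_ne_zero_iff]
  congr!
  ext i j
  simp [Matrix.vandermonde_apply]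

theorem det_vandermonde_ne_zero_of_injective_eval {n : ℕ} {g : Fin n → MvPolynomial σ R}
    (z : σ → R) (hz : Function.Injective fun i => eval z (g i)) :
    (Matrix.vandermonde g).det ≠ 0 :=
  fun h => (eval_det_vandermonde_ne_zero_iff g z).2 hz (by rw [h, map_zero])

variable [Infinite R]

theorem eq_zero_of_eval_eq_zero_of_eval_ne_zero {w q : MvPolynomial σ R} (hw : w ≠ 0)
    (h : ∀ x, eval x w ≠ 0 → eval x q = 0) : q = 0 := by
  refine (mul_eq_zero.1 (MvPolynomial.funext fun x => ?_)).resolve_left hw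
  by_cases hx : eval x w = 0 <;> simp [hx, h]

theorem eq_of_eval_eq_of_injective {n : ℕ} {p q : MvPolynomial (Fin n) R}
    (h : ∀ x : Fin n → R, Function.Injective x → eval x p = eval x q) : p = q := by
  rw [← sub_eq_zero]
  refine eq_zero_of_eval_eq_zero_of_eval_ne_zero
    (det_vandermonde_ne_zero_of_injective_eval (g := X) (fun i => Infinite.natEmbedding R i) ?_)
    fun x hx => ?_
  · simp only [eval_X]
    exact (Infinite.natEmbedding R).injective.comp Fin.val_injective
  · rw [eval_det_vandermonde_ne_zero_iff] at hx
    simp only [eval_X] at hx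
    rw [map_sub, h x hx, sub_self]

theorem eval_homogeneousComponent_eq_zero_of_degree_lt {p : MvPolynomial σ R} {x : σ → R}
    {f : Polynomial R} {m : ℕ} (hf : f.degree < m)
    (h : ∀ t ≠ 0, f.eval t = eval (t • x) p) {k : ℕ} (hk : m ≤ k) :
    eval x (homogeneousComponent k p) = 0 := by
  by_cases hkp : p.totalDegree < k
  · rw [homogeneousComponent_eq_zero k p hkp, map_zero]
  let g : Polynomial R := ∑ j ∈ range (p.totalDegree + 1),
    Polynomial.monomial j (eval x (homogeneousComponent j p))
  have hfg : f = g := by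
    refine Polynomial.eq_of_infinite_eval_eq _ _
      ((Set.finite_singleton 0).infinite_compl.mono fun t ht => ?_)
    simp [g, h t ht, Polynomial.eval_finsetSum, eval_smul_eq_sum_homogeneousComponent, mul_comm]
  have hg : g.coeff k = eval x (homogeneousComponent k p) := by
    simp [g, Polynomial.finsetSum_coeff, Polynomial.coeff_monomial, not_lt.1 hkp]
  rw [← hg, ← hfg, (Polynomial.degree_lt_iff_coeff_zero f m).1 hf k hk]

end Domain

end MvPolynomial

theorem Finset.prod_congr_of_pair_mul_eq {ι M : Type*} [CommMonoid M] [DecidableEq ι]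
    {s : Finset ι} {f g : ι → M} {p q : ι} (hp : p ∈ s) (hq : q ∈ s) (hpq : p ≠ q)
    (hpair : f p * f q = g p * g q) (h : ∀ j ∈ s, j ≠ p → j ≠ q → f j = g j) :
    ∏ j ∈ s, f j = ∏ j ∈ s, g j := by
  have hq' : q ∈ s.erase p := mem_erase.2 ⟨hpq.symm, hq⟩
  rw [← mul_prod_erase s f hp, ← mul_prod_erase s g hp, ← mul_prod_erase _ f hq',
    ← mul_prod_erase _ g hq', ← mul_assoc, ← mul_assoc, hpair]
  refine congr_arg _ (prod_congr rfl fun j hj => ?_)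
  obtain ⟨hjq, hjp, hjs⟩ := mem_erase.1 hj |>.imp_right mem_erase.1
  exact h j hjs hjp hjq

theorem div_mul_div_neg_self {K : Type*} [Field K] {w t : K} (h₁ : w ≠ t) (h₂ : w ≠ -t) :
    (w + t) / (w - t) * ((w + -t) / (w - -t)) = 1 := by
  rw [← sub_ne_zero] at h₁ h₂
  field_simp
  ring

def substOpposite {R : Type*} [Neg R] {n : ℕ} (t : R) (x : Fin n → R) : Fin n → R :=
  fun i => if (i : ℕ) = 0 then t else if (i : ℕ) = 1 then -t else x i

theorem map_substOpposite {F R S : Type*} [AddGroup R] [AddGroup S] [FunLike F R S]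
    [AddMonoidHomClass F R S] (f : F) {n : ℕ} (t : R) (x : Fin n → R) :
    (fun i => f (substOpposite t x i)) = substOpposite (f t) fun i => f (x i) := by
  funext i
  simp only [substOpposite]
  split_ifs <;> simp

theorem eval_aeval_substOpposite_X {n : ℕ} (e : Fin n) (z : Fin n → ℂ)
    (P : MvPolynomial (Fin n) ℂ) :
    eval z (aeval (substOpposite (X e) X) P) = eval (substOpposite (z e) z) P := by
  rw [eval_aeval, map_substOpposite (eval z)]
  simp only [eval_X]

theorem exists_injective_substOpposite_self {n : ℕ} (e : Fin n) (he : (e : ℕ) < 2) :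
    ∃ z : Fin n → ℂ, Function.Injective (substOpposite (z e) z) := by
  refine ⟨fun i => Int.castRingHom ℂ ((i : ℕ) + 1), ?_⟩
  rw [← map_substOpposite (Int.castRingHom ℂ)]
  refine Int.cast_injective.comp fun i j h => Fin.ext ?_
  simp only [substOpposite] at h
  split_ifs at h <;> omega

namespace SPartition

variable {n : ℕ} (lam : SPartition n)

noncomputable def ratioProd (y : Fin n → ℂ) : ℂ :=
  ∏ i : Fin lam.len, ∏ j : Fin n,
    if (i : ℕ) < (j : ℕ) then
      (y (Fin.castLE lam.len_le i) + y j) / (y (Fin.castLE lam.len_le i) - y j)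
    else 1

noncomputable def qTerm (a : ℕ → ℂ) (y : Fin n → ℂ) : ℂ :=
  (∏ i : Fin lam.len, genPow a (lam.part i) (y (Fin.castLE lam.len_le i))) * lam.ratioProd y

theorem QFormula_eq_sum_qTerm (a : ℕ → ℂ) (x : Fin n → ℂ) :
    QFormula lam a x = (2 : ℂ) ^ lam.len / ((n - lam.len).factorial : ℂ) *
      ∑ σ : Equiv.Perm (Fin n), lam.qTerm a (x ∘ σ) := rfl

theorem QFormula_comp_perm (a : ℕ → ℂ) (x : Fin n → ℂ) (σ : Equiv.Perm (Fin n)) :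
    QFormula lam a (x ∘ σ) = QFormula lam a x := by
  simp only [QFormula_eq_sum_qTerm]
  exact congr_arg _ (Equiv.sum_comp (Equiv.mulLeft σ) fun τ => lam.qTerm a (x ∘ τ))

theorem qTerm_eq_zero_of_add_eq_zero (a : ℕ → ℂ) {y : Fin n → ℂ} {k k' : Fin n}
    (hk : (k : ℕ) < lam.len) (hkk' : k < k') (h : y k + y k' = 0) : lam.qTerm a y = 0 := by
  refine mul_eq_zero_of_right _ (prod_eq_zero (mem_univ ⟨k, hk⟩) (prod_eq_zero (mem_univ k') ?_))
  simp [hkk', Fin.castLE, h]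

theorem qTerm_eq_of_eqOn_compl_pair (a : ℕ → ℂ) {y y' : Fin n → ℂ} (hy : Function.Injective y)
    (hy' : Function.Injective y') {p q : Fin n} (hpq : p ≠ q) (hq : y q = -y p)
    (hq' : y' q = -y' p) (hyy' : ∀ j, j ≠ p → j ≠ q → y j = y' j) :
    lam.qTerm a y = lam.qTerm a y' := by
  wlog hlt : p < q generalizing p q
  · exact this hpq.symm (by rw [hq, neg_neg]) (by rw [hq', neg_neg])
      (fun j hjq hjp => hyy' j hjp hjq) (lt_of_le_of_ne (not_lt.1 hlt) hpq.symm)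
  by_cases hp : (p : ℕ) < lam.len
  · rw [lam.qTerm_eq_zero_of_add_eq_zero a hp hlt (by rw [hq, add_neg_cancel]),
      lam.qTerm_eq_zero_of_add_eq_zero a hp hlt (by rw [hq', add_neg_cancel])]
  -- the rows `i < ℓ ≤ p < q` never meet `p`, `q`, so `y` and `y'` differ only in two columns
  have hip : ∀ i : Fin lam.len, (i : ℕ) < p := fun i => i.isLt.trans_le (not_lt.1 hp)
  have hiq : ∀ i : Fin lam.len, (i : ℕ) < q := fun i => (hip i).trans hlt
  have hne : ∀ i : Fin lam.len, Fin.castLE lam.len_le i ≠ p ∧ Fin.castLE lam.len_le i ≠ q :=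
    fun i => ⟨Fin.ne_of_lt (hip i), Fin.ne_of_lt (hiq i)⟩
  have hyi : ∀ i : Fin lam.len, y (Fin.castLE lam.len_le i) = y' (Fin.castLE lam.len_le i) :=
    fun i => hyy' _ (hne i).1 (hne i).2
  unfold qTerm ratioProd
  congr 1
  · exact prod_congr rfl fun i _ => by rw [hyi]
  refine prod_congr rfl fun i _ => prod_congr_of_pair_mul_eq (mem_univ p) (mem_univ q) hpq ?_
    fun j _ hjp hjq => by rw [hyi, hyy' j hjp hjq]
  simp only [if_pos (hip i), if_pos (hiq i), hq, hq']
  rw [div_mul_div_neg_self (hy.ne (hne i).1) (by rw [← hq]; exact hy.ne (hne i).2),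
    div_mul_div_neg_self (hy'.ne (hne i).1) (by rw [← hq']; exact hy'.ne (hne i).2)]

theorem QFormula_substOpposite (a : ℕ → ℂ) (h2 : 2 ≤ n) {t s : ℂ} {x : Fin n → ℂ}
    (ht : Function.Injective (substOpposite t x)) (hs : Function.Injective (substOpposite s x)) :
    QFormula lam a (substOpposite t x) = QFormula lam a (substOpposite s x) := by
  simp only [QFormula_eq_sum_qTerm]
  refine congr_arg _ (sum_congr rfl fun σ _ => ?_)
  let e₀ : Fin n := ⟨0, by omega⟩
  let e₁ : Fin n := ⟨1, by omega⟩
  have hoff : ∀ (r : ℂ) (j : Fin n), j ≠ σ.symm e₀ → j ≠ σ.symm e₁ →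
      (substOpposite r x ∘ σ) j = x (σ j) := by
    intro r j h₀ h₁
    have h₀' : (σ j : ℕ) ≠ 0 := fun h => h₀ (σ.eq_symm_apply.2 (Fin.ext h))
    have h₁' : (σ j : ℕ) ≠ 1 := fun h => h₁ (σ.eq_symm_apply.2 (Fin.ext h))
    simp [substOpposite, h₀', h₁']
  refine lam.qTerm_eq_of_eqOn_compl_pair a (ht.comp σ.injective) (hs.comp σ.injective)
    (p := σ.symm e₀) (q := σ.symm e₁) (by simp [e₀, e₁, Fin.ext_iff]) ?_ ?_
    fun j h₀ h₁ => by rw [hoff t j h₀ h₁, hoff s j h₀ h₁]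
  · simp [substOpposite, e₀, e₁]
  · simp [substOpposite, e₀, e₁]

end SPartition

theorem IsQPoly.qSym {n : ℕ} {lam : SPartition n} {a : ℕ → ℂ} {P : MvPolynomial (Fin n) ℂ}
    (hP : IsQPoly lam a P) : QSym P := by
  refine ⟨fun σ => eq_of_eval_eq_of_injective fun x hx => ?_, fun h2 t s x => ?_⟩
  · rw [eval_rename, hP _ (hx.comp σ.injective), hP x hx, lam.QFormula_comp_perm]
  change eval (substOpposite t x) P = eval (substOpposite s x) P
  let e₀ : Fin n := ⟨0, by omega⟩
  let e₁ : Fin n := ⟨1, by omega⟩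
  have hvdm : ∀ e : Fin n, (e : ℕ) < 2 →
      (Matrix.vandermonde (substOpposite (X e : MvPolynomial (Fin n) ℂ) X)).det ≠ 0 := by
    intro e he
    obtain ⟨z, hz⟩ := exists_injective_substOpposite_self e he
    refine det_vandermonde_ne_zero_of_injective_eval z ?_
    simpa only [map_substOpposite (eval z), eval_X] using hz
  have key : aeval (substOpposite (X e₀ : MvPolynomial (Fin n) ℂ) X) P =
      aeval (substOpposite (X e₁ : MvPolynomial (Fin n) ℂ) X) P := by
    refine sub_eq_zero.1 (eq_zero_of_eval_eq_zero_of_eval_ne_zero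
      (mul_ne_zero (hvdm e₀ (by simp [e₀])) (hvdm e₁ (by simp [e₁]))) fun z hz => ?_)
    rw [map_mul, mul_ne_zero_iff, eval_det_vandermonde_ne_zero_iff,
      eval_det_vandermonde_ne_zero_iff, map_substOpposite (eval z),
      map_substOpposite (eval z)] at hz
    simp only [eval_X] at hz
    rw [map_sub, eval_aeval_substOpposite_X, eval_aeval_substOpposite_X, hP _ hz.1, hP _ hz.2,
      lam.QFormula_substOpposite a h2 hz.1 hz.2, sub_self]
  let y : Fin n → ℂ := fun i => if (i : ℕ) = 0 then t else if (i : ℕ) = 1 then s else x i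
  have hy : ∀ e : Fin n, substOpposite (y e) y = substOpposite (y e) x := by
    intro e; funext i; simp only [substOpposite, y]; split_ifs <;> rfl
  have := congr_arg (eval y) key
  rw [eval_aeval_substOpposite_X, eval_aeval_substOpposite_X, hy, hy] at this
  exact this

namespace SPartition

variable {n : ℕ} (lam : SPartition n)

noncomputable def headPoly (a : ℕ → ℂ) (y : Fin n → ℂ) : Polynomial ℂ :=
  ∏ p ∈ univ.sigma fun i : Fin lam.len => range (lam.part i),
    (Polynomial.C (y (Fin.castLE lam.len_le p.1)) * Polynomial.X - Polynomial.C (a p.2))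

theorem eval_headPoly (a : ℕ → ℂ) (y : Fin n → ℂ) (t : ℂ) :
    (lam.headPoly a y).eval t =
      ∏ i : Fin lam.len, genPow a (lam.part i) ((t • y) (Fin.castLE lam.len_le i)) := by
  simp only [headPoly, genPow, Polynomial.eval_prod, prod_sigma, Polynomial.eval_sub,
    Polynomial.eval_mul, Polynomial.eval_C, Polynomial.eval_X, Pi.smul_apply, smul_eq_mul,
    mul_comm]

theorem card_sigma_range_part :
    #(univ.sigma fun i : Fin lam.len => range (lam.part i)) = lam.size := by
  simp [card_sigma, size]

theorem natDegree_headPoly_le (a : ℕ → ℂ) (y : Fin n → ℂ) :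
    (lam.headPoly a y).natDegree ≤ lam.size := by
  refine (Polynomial.natDegree_prod_le _ _).trans
    ((sum_le_card_nsmul _ _ 1 fun p _ => ?_).trans ?_)
  · compute_degree
  · simp [size]

theorem coeff_headPoly_size (a : ℕ → ℂ) (y : Fin n → ℂ) :
    (lam.headPoly a y).coeff lam.size =
      ∏ i : Fin lam.len, y (Fin.castLE lam.len_le i) ^ lam.part i := by
  rw [← lam.card_sigma_range_part, ← mul_one #_, headPoly,
    Polynomial.coeff_prod_of_natDegree_le (n := 1)]
  · simp [Polynomial.coeff_C, prod_sigma]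
  · intro p _
    compute_degree

theorem coeff_headPoly_eq_of_size_le (a b : ℕ → ℂ) (y : Fin n → ℂ) {k : ℕ}
    (hk : lam.size ≤ k) :
    (lam.headPoly a y).coeff k = (lam.headPoly b y).coeff k := by
  rcases hk.eq_or_lt with rfl | hk
  · rw [coeff_headPoly_size, coeff_headPoly_size]
  · rw [Polynomial.coeff_eq_zero_of_natDegree_lt ((lam.natDegree_headPoly_le a y).trans_lt hk),
      Polynomial.coeff_eq_zero_of_natDegree_lt ((lam.natDegree_headPoly_le b y).trans_lt hk)]

theorem ratioProd_smul {t : ℂ} (ht : t ≠ 0) (y : Fin n → ℂ) :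
    lam.ratioProd (t • y) = lam.ratioProd y := by
  refine prod_congr rfl fun i _ => prod_congr rfl fun j _ => ?_
  simp only [Pi.smul_apply, smul_eq_mul, ← mul_add, ← mul_sub, mul_div_mul_left _ _ ht]

noncomputable def scaledQFormula (a : ℕ → ℂ) (x : Fin n → ℂ) : Polynomial ℂ :=
  Polynomial.C ((2 : ℂ) ^ lam.len / ((n - lam.len).factorial : ℂ)) *
    ∑ σ : Equiv.Perm (Fin n), lam.headPoly a (x ∘ σ) * Polynomial.C (lam.ratioProd (x ∘ σ))

theorem eval_scaledQFormula (a : ℕ → ℂ) (x : Fin n → ℂ) {t : ℂ} (ht : t ≠ 0) :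
    (lam.scaledQFormula a x).eval t = QFormula lam a (t • x) := by
  simp only [scaledQFormula, QFormula_eq_sum_qTerm, qTerm, Polynomial.eval_mul,
    Polynomial.eval_C, Polynomial.eval_finsetSum, eval_headPoly]
  exact congr_arg _ (sum_congr rfl fun σ _ => by rw [← lam.ratioProd_smul ht]; rfl)

theorem degree_scaledQFormula_sub_lt (a b : ℕ → ℂ) (x : Fin n → ℂ) :
    (lam.scaledQFormula a x - lam.scaledQFormula b x).degree < lam.size := by
  refine (Polynomial.degree_lt_iff_coeff_zero _ _).2 fun k hk => ?_
  simp only [scaledQFormula, Polynomial.coeff_sub, Polynomial.coeff_C_mul,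
    Polynomial.finsetSum_coeff, Polynomial.coeff_mul_C,
    lam.coeff_headPoly_eq_of_size_le a b _ hk, sub_self]

end SPartition

theorem IsQPoly.eq_or_totalDegree_sub_lt {n : ℕ} {lam : SPartition n} {a b : ℕ → ℂ}
    {P Q : MvPolynomial (Fin n) ℂ} (hP : IsQPoly lam a P) (hQ : IsQPoly lam b Q) :
    Q = P ∨ (Q - P).totalDegree < lam.size := by
  refine or_iff_not_imp_left.2 fun hne => totalDegree_lt_of_homogeneousComponent_eq_zero
    (sub_ne_zero.2 hne) fun k hk => eq_of_eval_eq_of_injective fun x hx => ?_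
  rw [map_zero]
  refine eval_homogeneousComponent_eq_zero_of_degree_lt
    (lam.degree_scaledQFormula_sub_lt b a x) (fun t ht => ?_) hk
  have htx : Function.Injective (t • x) := (mul_right_injective₀ ht).comp hx
  rw [Polynomial.eval_sub, lam.eval_scaledQFormula b x ht, lam.eval_scaledQFormula a x ht,
    map_sub, hP _ htx, hQ _ htx]

/-- The factorial Schur Q-function `Q*_λ = Q_λ(·|0,1,2,…)` is Q-symmetric and
`Q*_λ - Q_λ` has total degree strictly less than `|λ|` (or is zero). -/
theorem factorialSchurQ_QSym_top_part (n : ℕ) (lam : SPartition n)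
    (P Pstar : MvPolynomial (Fin n) ℂ)
    (hP : IsQPoly lam zeroSeq P) (hPstar : IsQPoly lam deltaSeq Pstar) :
    QSym Pstar ∧ (Pstar = P ∨ (Pstar - P).totalDegree < lam.size) :=
  ⟨hPstar.qSym, hP.eq_or_totalDegree_sub_lt hPstar⟩
end

section
/- Stronger vanishing property: for strict partitions λ, μ of length at most n, if λ is not contained in μ (i.e., λ_j > μ_j for some j after padding with zeros), then Q*_λ(μ₁,...,μₙ) = 0. -/
open MvPolynomial

/-! Perturb `μ` to `x(t) = μ + t c` with `c` injective. For small `t ≠ 0` the coordinates of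
`x(t)` are distinct, so `P(x(t))` is given by the formula, and `P(μ)` is its limit as `t → 0`.
Every ratio `(x_a + x_b)/(x_a - x_b)` has a limit: either `μ_a ≠ μ_b`, or, `μ` being strict,
`μ_a = μ_b = 0` and the ratio is constant in `t`. Every `σ`-term also contains a factor
`(x_{σ(i)}(t) | δ)^{λ_i}` that vanishes at `t = 0`: if `λ_j > μ_j`, the `j + 1` indices `i ≤ j` cannot
all satisfy `μ_{σ(i)} ≥ λ_i ≥ λ_j`, as that forces `σ(i) < j`. -/

open Filter Topology

section Perturbation

variable {𝕜 : Type*} [NormedField 𝕜]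

theorem eventually_add_mul_ne_zero {α β : 𝕜} (h : α ≠ 0 ∨ β ≠ 0) :
    ∀ᶠ t in 𝓝[≠] 0, α + t * β ≠ 0 := by
  by_cases hα : α = 0
  · filter_upwards [self_mem_nhdsWithin] with t ht
    rw [hα, zero_add]
    exact mul_ne_zero ht (h.resolve_left (not_not.mpr hα))
  · have hcont : ContinuousAt (fun t : 𝕜 => α + t * β) 0 := by fun_prop
    exact nhdsWithin_le_nhds (hcont.eventually_ne (by simpa using hα))

theorem exists_tendsto_add_mul_div_add_mul {α α' β β' : 𝕜} (h : α = 0 → α' = 0) :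
    ∃ L, Tendsto (fun t => (α' + t * β') / (α + t * β)) (𝓝[≠] 0) (𝓝 L) := by
  by_cases hα : α = 0
  · refine ⟨β' / β, tendsto_const_nhds.congr' ?_⟩
    filter_upwards [self_mem_nhdsWithin] with t ht
    rw [hα, h hα, zero_add, zero_add, mul_div_mul_left _ _ ht]
  · have hcont : ContinuousAt (fun t : 𝕜 => (α' + t * β') / (α + t * β)) 0 :=
      ContinuousAt.div (by fun_prop) (by fun_prop) (by simpa using hα)
    exact ⟨_, hcont.continuousWithinAt⟩

variable {ι : Type*} {p c : ι → 𝕜}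

theorem eventually_injective_add_smul [Finite ι] (hc : Function.Injective c) :
    ∀ᶠ t : 𝕜 in 𝓝[≠] 0, Function.Injective (p + t • c) := by
  have hpair : ∀ a b, ∀ᶠ t in 𝓝[≠] (0 : 𝕜), a ≠ b → (p + t • c) a ≠ (p + t • c) b := by
    intro a b
    by_cases hab : a = b
    · exact Eventually.of_forall fun _ h => absurd hab h
    · have hne : p a - p b ≠ 0 ∨ c a - c b ≠ 0 :=
        Or.inr (sub_ne_zero.mpr (hc.ne hab))
      filter_upwards [eventually_add_mul_ne_zero hne] with t ht _ heq
      simp only [Pi.add_apply, Pi.smul_apply, smul_eq_mul] at heq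
      exact ht (by linear_combination heq)
  have hall := eventually_all.mpr fun a => eventually_all.mpr (hpair a)
  filter_upwards [hall] with t ht a b hab
  by_contra hne
  exact ht a b hne hab

theorem exists_tendsto_add_div_sub_add_smul {a b : ι} (h : p a = p b → p a + p b = 0) :
    ∃ L, Tendsto (fun t : 𝕜 => ((p + t • c) a + (p + t • c) b) / ((p + t • c) a - (p + t • c) b))
      (𝓝[≠] 0) (𝓝 L) := by
  obtain ⟨L, hL⟩ := exists_tendsto_add_mul_div_add_mul (α := p a - p b) (α' := p a + p b)
    (β := c a - c b) (β' := c a + c b) fun h0 => h (sub_eq_zero.mp h0)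
  refine ⟨L, hL.congr fun t => ?_⟩
  simp only [Pi.add_apply, Pi.smul_apply, smul_eq_mul]
  congr 1 <;> ring

end Perturbation

theorem exists_tendsto_prod {ι α M : Type*} [CommMonoid M] [TopologicalSpace M] [ContinuousMul M]
    {f : ι → α → M} {l : Filter α} (s : Finset ι) (h : ∀ i, ∃ L, Tendsto (f i) l (𝓝 L)) :
    ∃ L, Tendsto (fun x => ∏ i ∈ s, f i x) l (𝓝 L) := by
  choose L hL using h
  exact ⟨∏ i ∈ s, L i, tendsto_finsetProd s fun i _ => hL i⟩

theorem tendsto_zero_mul_of_exists_tendsto {α M : Type*} [MulZeroClass M] [TopologicalSpace M]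
    [ContinuousMul M] {f g : α → M} {l : Filter α} (hf : Tendsto f l (𝓝 0))
    (hg : ∃ L, Tendsto g l (𝓝 L)) : Tendsto (fun x => f x * g x) l (𝓝 0) := by
  obtain ⟨L, hL⟩ := hg
  simpa using hf.mul hL

theorem exists_lt_comp_perm {n : ℕ} {α : Type*} [LinearOrder α] {u v : Fin n → α}
    (hu : Antitone u) (hv : Antitone v) {j : Fin n} (hj : u j < v j) (σ : Equiv.Perm (Fin n)) :
    ∃ i ≤ j, u (σ i) < v i := by
  by_contra! h
  have hmaps : Set.MapsTo σ (Finset.Iic j) (Finset.Iio j) := by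
    intro i hi
    simp only [Finset.coe_Iic, Finset.coe_Iio, Set.mem_Iic, Set.mem_Iio] at hi ⊢
    by_contra! hji
    exact (hj.trans_le ((hv hi).trans (h i hi))).not_ge (hu hji)
  have hcard := Finset.card_le_card_of_injOn σ hmaps σ.injective.injOn
  simp only [Fin.card_Iic, Fin.card_Iio] at hcard
  omega

namespace SPartition

variable {n : ℕ}

theorem padN_antitone (l : SPartition n) : Antitone l.padN := by
  intro a b hab
  unfold padN
  by_cases hb : (b : ℕ) < l.len
  · rw [dif_pos hb, dif_pos (lt_of_le_of_lt (Fin.le_def.mp hab) hb)]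
    exact l.anti.antitone (show (⟨a, _⟩ : Fin l.len) ≤ ⟨b, hb⟩ from hab)
  · rw [dif_neg hb]
    exact Nat.zero_le _

theorem padN_eq_zero_of_padN_eq (l : SPartition n) {a b : Fin n} (hab : a ≠ b)
    (h : l.padN a = l.padN b) : l.padN a = 0 := by
  unfold padN at h ⊢
  by_cases ha : (a : ℕ) < l.len
  · by_cases hb : (b : ℕ) < l.len
    · rw [dif_pos ha, dif_pos hb] at h
      exact absurd (Fin.ext (Fin.mk.inj_iff.mp (l.anti.injective h))) hab
    · rwa [dif_neg hb] at h
  · rw [dif_neg ha]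

theorem padC_add_eq_zero_of_padC_eq (l : SPartition n) {a b : Fin n} (hab : a ≠ b)
    (h : l.padC a = l.padC b) : l.padC a + l.padC b = 0 := by
  have hN : l.padN a = l.padN b := Nat.cast_injective h
  simp [padC, ← hN, l.padN_eq_zero_of_padN_eq hab hN]

theorem exists_padN_lt_part {lam mu : SPartition n} (hnotsub : ∃ i, mu.padN i < lam.padN i)
    (σ : Equiv.Perm (Fin n)) :
    ∃ i : Fin lam.len, mu.padN (σ (Fin.castLE lam.len_le i)) < lam.part i := by
  obtain ⟨j, hj⟩ := hnotsub
  obtain ⟨i, hij, hi⟩ := exists_lt_comp_perm mu.padN_antitone lam.padN_antitone hj σ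
  have hj_len : (j : ℕ) < lam.len := by
    by_contra hj_len
    simp [padN, hj_len] at hj
  have hi_len : (i : ℕ) < lam.len := lt_of_le_of_lt hij hj_len
  refine ⟨⟨i, hi_len⟩, ?_⟩
  simpa [padN, hi_len] using hi

end SPartition

theorem continuous_genPow (a : ℕ → ℂ) (k : ℕ) : Continuous (genPow a k) := by
  unfold genPow
  fun_prop

theorem genPow_deltaSeq_natCast_eq_zero {m k : ℕ} (h : m < k) : genPow deltaSeq k m = 0 :=
  Finset.prod_eq_zero (Finset.mem_range.mpr h) (by simp [deltaSeq])

theorem tendsto_QFormula_add_smul {n : ℕ} {lam : SPartition n} {a : ℕ → ℂ} {p c : Fin n → ℂ}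
    (hvanish : ∀ σ : Equiv.Perm (Fin n),
      ∃ i : Fin lam.len, genPow a (lam.part i) (p (σ (Fin.castLE lam.len_le i))) = 0)
    (hp : ∀ k l, k ≠ l → p k = p l → p k + p l = 0) :
    Tendsto (fun t : ℂ => QFormula lam a (p + t • c)) (𝓝[≠] 0) (𝓝 0) := by
  unfold QFormula
  rw [show 𝓝 (0 : ℂ) = 𝓝 (_ * ∑ _σ : Equiv.Perm (Fin n), (0 : ℂ)) by simp]
  refine (tendsto_finsetSum _ fun σ _ => ?_).const_mul _
  refine tendsto_zero_mul_of_exists_tendsto ?_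
    (exists_tendsto_prod _ fun i => exists_tendsto_prod _ fun j => ?_)
  · obtain ⟨i₀, hi₀⟩ := hvanish σ
    have hcont : Continuous fun t : ℂ => ∏ i : Fin lam.len,
        genPow a (lam.part i) ((p + t • c) (σ (Fin.castLE lam.len_le i))) :=
      continuous_finsetProd _ fun i _ => (continuous_genPow _ _).comp (by fun_prop)
    have hval : ∏ i : Fin lam.len, genPow a (lam.part i) (p (σ (Fin.castLE lam.len_le i))) = 0 :=
      Finset.prod_eq_zero (Finset.mem_univ i₀) hi₀
    simpa [hval] using (hcont.tendsto 0).mono_left nhdsWithin_le_nhds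
  · by_cases hij : (i : ℕ) < (j : ℕ)
    · have hne : σ (Fin.castLE lam.len_le i) ≠ σ j := fun h => by
        have := congrArg Fin.val (σ.injective h)
        simp only [Fin.val_castLE] at this
        omega
      simpa only [hij, if_true] using exists_tendsto_add_div_sub_add_smul (c := c) (hp _ _ hne)
    · simpa only [hij, if_false] using ⟨1, tendsto_const_nhds⟩

/-- Stronger vanishing: if `λ ⊄ μ` then `Q*_λ(μ) = 0`. -/
theorem factorialSchurQ_strong_vanishing (n : ℕ) (lam mu : SPartition n)
    (Pstar : MvPolynomial (Fin n) ℂ) (hPstar : IsQPoly lam deltaSeq Pstar)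
    (hnotsub : ∃ i : Fin n, mu.padN i < lam.padN i) :
    MvPolynomial.eval mu.padC Pstar = 0 := by
  set c : Fin n → ℂ := fun k => (k : ℂ)
  have hc : Function.Injective c := Nat.cast_injective.comp Fin.val_injective
  have hQ : Tendsto (fun t : ℂ => QFormula lam deltaSeq (mu.padC + t • c)) (𝓝[≠] 0) (𝓝 0) := by
    refine tendsto_QFormula_add_smul (fun σ => ?_) fun k l hkl => mu.padC_add_eq_zero_of_padC_eq hkl
    obtain ⟨i, hi⟩ := SPartition.exists_padN_lt_part hnotsub σ
    exact ⟨i, genPow_deltaSeq_natCast_eq_zero hi⟩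
  have hP : Tendsto (fun t : ℂ => eval (mu.padC + t • c) Pstar) (𝓝[≠] 0)
      (𝓝 (eval mu.padC Pstar)) := by
    have hcont : Continuous fun t : ℂ => eval (mu.padC + t • c) Pstar :=
      (continuous_eval Pstar).comp (by fun_prop)
    simpa using (hcont.tendsto 0).mono_left nhdsWithin_le_nhds
  have hPQ : (fun t : ℂ => eval (mu.padC + t • c) Pstar) =ᶠ[𝓝[≠] 0]
      fun t => QFormula lam deltaSeq (mu.padC + t • c) :=
    (eventually_injective_add_smul hc).mono fun t ht => hPstar _ ht
  exact tendsto_nhds_unique hP (hQ.congr' hPQ.symm)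
end
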